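/- arXiv:2007.03463 — 5 statements merged into one kernel-verified Lean document; each statement's English description precedes it below -/
import Mathlib

section
/- Consider the two-player game on pure strategy sets {a,b} × {a,b} with payoffs u₁(a,a)=1, u₁(a,b)=0, u₁(b,a)=1/2, u₁(b,b)=1/2 and u₂(a,a)=0, u₂(a,b)=1, u₂(b,a)=1/2, u₂(b,b)=1/2, and let ν be the possibility capacity on {a,b} with density [ν](a)=[ν](b)=1 (the greatest element of M_∪({a,b})). Then (ν, ν) is a Nash equilibrium of the game in possibility-capacity strategies with expected payoffs eu_i(ν₁, ν₂) = ∫^{∨∧} u_i d(ν₁ ⊛ ν₂), where both the integral and the tensor product are taken with respect to the minimum t-norm ∧; but P₁^∧(a, ν) = 1 and P₁^∧(b, ν) = 1/2, so R₁^∧(ν) = {a} and (ν, ν) is not an equilibrium under uncertainty with respect to ∧. -/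
open Set TopologicalSpace

universe u v

/-- A (upper-semicontinuous) capacity on a topological space `X`:
a normalized monotone set function on the closed subsets, upper semicontinuous
in the sense of Zarichnyi–Nykyforchyn. -/
structure Capacity (X : Type u) [TopologicalSpace X] : Type u where
  toFun : Closeds X → ℝ
  empty' : toFun ⊥ = 0
  univ' : toFun ⊤ = 1
  mono' : ∀ F G : Closeds X, F ≤ G → toFun F ≤ toFun G
  usc' : ∀ (F : Closeds X) (a : ℝ), toFun F < a →
    ∃ O : Set X, IsOpen O ∧ (F : Set X) ⊆ O ∧ ∀ B : Closeds X, (B : Set X) ⊆ O → toFun B < a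

namespace Capacity

variable {X : Type u} [TopologicalSpace X]

/-- Value of a capacity on (the closure of) an arbitrary set; on closed sets this is
the value of the capacity. -/
def cval (ν : Capacity X) (A : Set X) : ℝ := ν.toFun ⟨closure A, isClosed_closure⟩

/-- The sup-extension of a capacity to open sets:
`ν(U) = sup {ν K : K closed, K ⊆ U}`. -/
noncomputable def oval (ν : Capacity X) (U : Set X) : ℝ :=
  sSup {r : ℝ | ∃ K : Closeds X, (K : Set X) ⊆ U ∧ ν.toFun K = r}

end Capacity

/-- The topology on the space `MX` of capacities, generated by the subbase
`O₋(F,a) = {c : c(F) < a}` (`F` closed) and `O₊(U,a) = {c : c(U) > a}` (`U` open). -/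
instance capacityTopology (X : Type u) [TopologicalSpace X] : TopologicalSpace (Capacity X) :=
  TopologicalSpace.generateFrom
    ({S | ∃ (F : Closeds X) (a : ℝ), a ∈ Icc (0:ℝ) 1 ∧
        S = {c : Capacity X | c.toFun F < a}} ∪
     {S | ∃ U : Set X, IsOpen U ∧ ∃ a ∈ Icc (0:ℝ) 1,
        S = {c : Capacity X | a < c.oval U}})

/-- A possibility capacity: `ν(A ∪ B) = max (ν A) (ν B)` on closed sets. -/
def IsPossibility {X : Type u} [TopologicalSpace X] (ν : Capacity X) : Prop :=
  ∀ A B : Closeds X, ν.toFun (A ⊔ B) = max (ν.toFun A) (ν.toFun B)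

/-- A necessity capacity: `ν(A ∩ B) = min (ν A) (ν B)` on closed sets. -/
def IsNecessity {X : Type u} [TopologicalSpace X] (ν : Capacity X) : Prop :=
  ∀ A B : Closeds X, ν.toFun (A ⊓ B) = min (ν.toFun A) (ν.toFun B)

/-- A triangular norm on `[0,1]`. -/
structure Tnorm : Type where
  toFun : ℝ → ℝ → ℝ
  mem' : ∀ s ∈ Icc (0:ℝ) 1, ∀ t ∈ Icc (0:ℝ) 1, toFun s t ∈ Icc (0:ℝ) 1
  comm' : ∀ s ∈ Icc (0:ℝ) 1, ∀ t ∈ Icc (0:ℝ) 1, toFun s t = toFun t s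
  assoc' : ∀ s ∈ Icc (0:ℝ) 1, ∀ t ∈ Icc (0:ℝ) 1, ∀ r ∈ Icc (0:ℝ) 1,
    toFun (toFun s t) r = toFun s (toFun t r)
  mono' : ∀ s₁ ∈ Icc (0:ℝ) 1, ∀ s₂ ∈ Icc (0:ℝ) 1, ∀ t₁ ∈ Icc (0:ℝ) 1, ∀ t₂ ∈ Icc (0:ℝ) 1,
    s₁ ≤ s₂ → t₁ ≤ t₂ → toFun s₁ t₁ ≤ toFun s₂ t₂
  one' : ∀ s ∈ Icc (0:ℝ) 1, toFun s 1 = s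

/-- Continuity of a t-norm (on the unit square). -/
def Tnorm.Cont (star : Tnorm) : Prop :=
  ContinuousOn (fun q : ℝ × ℝ => star.toFun q.1 q.2) (Icc 0 1 ×ˢ Icc 0 1)

/-- The t-normed (fuzzy) integral `∫^{∨∗} f dν = sup { ν(f⁻¹[t,1]) ∗ t : t ∈ [0,1] }`. -/
noncomputable def tInt {X : Type u} [TopologicalSpace X] (star : Tnorm) (ν : Capacity X) (f : X → ℝ) : ℝ :=
  sSup {r : ℝ | ∃ t ∈ Icc (0:ℝ) 1, r = star.toFun (ν.cval (f ⁻¹' Icc t 1)) t}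
/-- The minimum t-norm `s ∧ t = min s t`. -/
def minTnorm : Tnorm where
  toFun := min
  mem' := fun s hs t ht => ⟨le_min hs.1 ht.1, min_le_of_left_le hs.2⟩
  comm' := fun s _ t _ => min_comm s t
  assoc' := fun s _ t _ r _ => min_assoc s t r
  mono' := fun _ _ _ _ _ _ _ _ h1 h2 => min_le_min h1 h2
  one' := fun s hs => min_eq_left hs.2
/-- `IsPossTensor₂ ast ν μ τ` says that `τ ∈ M_∪(X × Y)` is the tensor product `ν ⊛ μ`
(generated by the t-norm `ast`) of possibility capacities: the possibility capacity
with density `[ν ⊛ μ](x,y) = [ν](x) ∗ [μ](y)`. -/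
def IsPossTensor₂ {X : Type u} {Y : Type v} [TopologicalSpace X] [TopologicalSpace Y]
    (ast : Tnorm) (ν : Capacity X) (μ : Capacity Y) (τ : Capacity (X × Y)) : Prop :=
  ∀ B : Set (X × Y), IsClosed B →
    τ.cval B = sSup ((fun q : X × Y => ast.toFun (ν.cval {q.1}) (μ.cval {q.2})) '' B)
section MyHelpers

variable {X : Type u} [TopologicalSpace X]

lemma Capacity.toFun_le_one (ν : Capacity X) (K : Closeds X) : ν.toFun K ≤ 1 := by
  have := ν.mono' K ⊤ le_top; rwa [ν.univ'] at this

lemma Capacity.cval_univ' (ν : Capacity X) : ν.cval (univ : Set X) = 1 := by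
  have h : (⟨closure (univ : Set X), isClosed_closure⟩ : Closeds X) = ⊤ :=
    Closeds.ext (by simp)
  rw [Capacity.cval, h, ν.univ']

lemma Capacity.cval_empty' (ν : Capacity X) : ν.cval (∅ : Set X) = 0 := by
  have h : (⟨closure (∅ : Set X), isClosed_closure⟩ : Closeds X) = ⊥ :=
    Closeds.ext (by simp)
  rw [Capacity.cval, h, ν.empty']

lemma tInt_bddAbove (ν : Capacity X) (f : X → ℝ) :
    BddAbove {r : ℝ | ∃ t ∈ Icc (0:ℝ) 1, r = minTnorm.toFun (ν.cval (f ⁻¹' Icc t 1)) t} := by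
  refine ⟨1, ?_⟩
  rintro r ⟨t, ht, rfl⟩
  exact le_trans (min_le_right _ _) ht.2

lemma tInt_le_one (ν : Capacity X) (f : X → ℝ) : tInt minTnorm ν f ≤ 1 := by
  unfold tInt
  refine csSup_le ⟨_, ⟨0, ⟨le_refl 0, zero_le_one⟩, rfl⟩⟩ ?_
  rintro r ⟨t, ht, rfl⟩
  exact le_trans (min_le_right _ _) ht.2

lemma tInt_eq_one (ν : Capacity X) (f : X → ℝ)
    (h : ∀ t ∈ Icc (0:ℝ) 1, ν.cval (f ⁻¹' Icc t 1) = 1) :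
    tInt minTnorm ν f = 1 := by
  refine le_antisymm (tInt_le_one ν f) ?_
  unfold tInt
  refine le_csSup (tInt_bddAbove ν f) ?_
  refine ⟨1, ⟨zero_le_one, le_refl 1⟩, ?_⟩
  rw [h 1 ⟨zero_le_one, le_refl 1⟩]
  simp [minTnorm]

lemma tInt_const_half (ν : Capacity X) (f : X → ℝ) (hf : ∀ x, f x = 1/2) :
    tInt minTnorm ν f = 1/2 := by
  unfold tInt
  refine le_antisymm ?_ ?_
  · refine csSup_le ⟨_, ⟨0, ⟨le_refl 0, zero_le_one⟩, rfl⟩⟩ ?_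
    rintro r ⟨t, ht, rfl⟩
    by_cases h : t ≤ 1/2
    · exact le_trans (min_le_right _ _) h
    · have hpre : f ⁻¹' Icc t 1 = ∅ := by
        ext x
        simp only [mem_preimage, mem_Icc, mem_empty_iff_false, iff_false, not_and, hf x]
        intro h1; linarith
      rw [hpre, ν.cval_empty']
      have : minTnorm.toFun 0 t = min 0 t := rfl
      rw [this]
      calc min (0:ℝ) t ≤ 0 := min_le_left _ _
        _ ≤ 1/2 := by norm_num
  · refine le_csSup (tInt_bddAbove ν f) ?_
    refine ⟨1/2, ⟨by norm_num, by norm_num⟩, ?_⟩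
    have hpre : f ⁻¹' Icc (1/2 : ℝ) 1 = univ := by
      ext x
      simp only [mem_preimage, mem_Icc, mem_univ, iff_true, hf x]
      norm_num
    rw [hpre, ν.cval_univ']
    norm_num [minTnorm]

end MyHelpers

/-- in the 2×2 game with `u₁(a,a)=1, u₁(a,b)=0, u₁(b,a)=u₁(b,b)=1/2`,
`u₂(a,a)=0, u₂(a,b)=1, u₂(b,a)=u₂(b,b)=1/2`, the greatest possibility capacity `ν`
(density `[ν](a)=[ν](b)=1`) gives a Nash equilibrium `(ν,ν)` of the game in
possibility-capacity strategies (integral and tensor product with respect to the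
minimum t-norm), but `P₁^∧(a,ν)=1`, `P₁^∧(b,ν)=1/2`, so `R₁^∧(ν)={a}` and `(ν,ν)` is
not an equilibrium under uncertainty with respect to `∧`. -/
theorem example_nash_but_not_equilibrium (a b : Bool) (hab : a ≠ b)
    (u₁ u₂ : Bool × Bool → ℝ)
    (hu₁ : u₁ (a, a) = 1 ∧ u₁ (a, b) = 0 ∧ u₁ (b, a) = 1/2 ∧ u₁ (b, b) = 1/2)
    (hu₂ : u₂ (a, a) = 0 ∧ u₂ (a, b) = 1 ∧ u₂ (b, a) = 1/2 ∧ u₂ (b, b) = 1/2)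
    (ν : Capacity Bool) (hν : IsPossibility ν)
    (hνa : ν.cval {a} = 1) (hνb : ν.cval {b} = 1) :
    -- `(ν, ν)` is a Nash equilibrium of the game in possibility-capacity strategies:
    ((∀ ν' : Capacity Bool, IsPossibility ν' →
        ∀ τ' : Capacity (Bool × Bool), IsPossTensor₂ minTnorm ν' ν τ' →
        ∀ τ : Capacity (Bool × Bool), IsPossTensor₂ minTnorm ν ν τ →
          tInt minTnorm τ' u₁ ≤ tInt minTnorm τ u₁) ∧
     (∀ μ' : Capacity Bool, IsPossibility μ' →
        ∀ τ' : Capacity (Bool × Bool), IsPossTensor₂ minTnorm ν μ' τ' →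
        ∀ τ : Capacity (Bool × Bool), IsPossTensor₂ minTnorm ν ν τ →
          tInt minTnorm τ' u₂ ≤ tInt minTnorm τ u₂)) ∧
    -- but it is not an equilibrium under uncertainty with respect to `∧`:
    tInt minTnorm ν (fun y => u₁ (a, y)) = 1 ∧
    tInt minTnorm ν (fun y => u₁ (b, y)) = 1/2 ∧
    {x : Bool | tInt minTnorm ν (fun y => u₁ (x, y)) =
        sSup (Set.range fun z : Bool => tInt minTnorm ν (fun y => u₁ (z, y)))} = {a} ∧
    ¬ (ν.oval ({x : Bool | tInt minTnorm ν (fun y => u₁ (x, y)) =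
          sSup (Set.range fun z : Bool => tInt minTnorm ν (fun y => u₁ (z, y)))}ᶜ) = 0 ∧
       ν.oval ({y : Bool | tInt minTnorm ν (fun x => u₂ (x, y)) =
          sSup (Set.range fun w : Bool => tInt minTnorm ν (fun x => u₂ (x, w)))}ᶜ) = 0) := by
  obtain ⟨h11, h12, h13, h14⟩ := hu₁
  obtain ⟨h21, h22, h23, h24⟩ := hu₂
  have hx : ∀ x : Bool, x = a ∨ x = b := by
    intro x; rcases x <;> rcases a <;> rcases b <;> simp_all
  have hsing : ∀ x : Bool, ν.cval {x} = 1 := by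
    intro x; rcases hx x with h | h <;> subst h <;> assumption
  -- P₁^∧(a, ν) = 1
  have hPa : tInt minTnorm ν (fun y => u₁ (a, y)) = 1 := by
    apply tInt_eq_one
    intro t ht
    rcases lt_or_ge 0 t with h0 | h0
    · have hpre : (fun y => u₁ (a, y)) ⁻¹' Icc t 1 = {a} := by
        ext x
        rcases hx x with h | h <;> subst h
        · simp [h11, mem_Icc, ht.2]
        · simp only [mem_preimage, h12, mem_Icc, mem_singleton_iff]
          constructor
          · rintro ⟨h1, -⟩; linarith
          · intro h; exact absurd h.symm hab
      rw [hpre]; exact hsing a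
    · have ht0 : t = 0 := le_antisymm h0 ht.1
      subst ht0
      have hpre : (fun y => u₁ (a, y)) ⁻¹' Icc (0:ℝ) 1 = univ := by
        ext x
        rcases hx x with h | h <;> subst h <;> simp [h11, h12, mem_Icc]
      rw [hpre]; exact ν.cval_univ'
  -- P₁^∧(b, ν) = 1/2
  have hPb : tInt minTnorm ν (fun y => u₁ (b, y)) = 1/2 := by
    apply tInt_const_half
    intro x; rcases hx x with h | h <;> subst h <;> assumption
  -- sup of the payoffs
  have hsup : sSup (Set.range fun z : Bool => tInt minTnorm ν (fun y => u₁ (z, y))) = 1 := by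
    have hr : (Set.range fun z : Bool => tInt minTnorm ν (fun y => u₁ (z, y)))
        = {1, 1/2} := by
      ext r
      simp only [Set.mem_range, mem_insert_iff, mem_singleton_iff]
      constructor
      · rintro ⟨z, rfl⟩
        rcases hx z with h | h <;> subst h
        · left; exact hPa
        · right; exact hPb
      · rintro (rfl | rfl)
        exacts [⟨a, hPa⟩, ⟨b, hPb⟩]
    rw [hr, csSup_pair]
    exact sup_eq_left.mpr (by norm_num)
  -- R₁^∧(ν) = {a}
  have hR : {x : Bool | tInt minTnorm ν (fun y => u₁ (x, y)) =
      sSup (Set.range fun z : Bool => tInt minTnorm ν (fun y => u₁ (z, y)))} = {a} := by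
    ext x
    simp only [mem_setOf_eq, mem_singleton_iff, hsup]
    rcases hx x with h | h <;> subst h
    · simp [hPa]
    · rw [hPb]
      constructor
      · intro h; norm_num at h
      · intro h; exact absurd h.symm hab
  -- value of tensor products on nonempty sets
  have hτval : ∀ τ : Capacity (Bool × Bool), IsPossTensor₂ minTnorm ν ν τ →
      ∀ B : Set (Bool × Bool), B.Nonempty → τ.cval B = 1 := by
    intro τ hτ B hB
    rw [hτ B (isClosed_discrete B)]
    have himg : (fun q : Bool × Bool =>
        minTnorm.toFun (ν.cval {q.1}) (ν.cval {q.2})) '' B = {1} := by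
      apply Subset.antisymm
      · rintro r ⟨q, hq, rfl⟩
        simp [hsing q.1, hsing q.2, minTnorm]
      · rintro r rfl
        obtain ⟨q, hq⟩ := hB
        exact ⟨q, hq, by simp [hsing q.1, hsing q.2, minTnorm]⟩
    rw [himg, csSup_singleton]
  have htInt1 : ∀ τ : Capacity (Bool × Bool), IsPossTensor₂ minTnorm ν ν τ →
      tInt minTnorm τ u₁ = 1 := by
    intro τ hτ'
    apply tInt_eq_one
    intro t ht
    exact hτval τ hτ' _ ⟨(a, a), by simp [h11, mem_Icc, ht.2]⟩
  have htInt2 : ∀ τ : Capacity (Bool × Bool), IsPossTensor₂ minTnorm ν ν τ →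
      tInt minTnorm τ u₂ = 1 := by
    intro τ hτ'
    apply tInt_eq_one
    intro t ht
    exact hτval τ hτ' _ ⟨(a, b), by simp [h22, mem_Icc, ht.2]⟩
  refine ⟨⟨?_, ?_⟩, hPa, hPb, hR, ?_⟩
  · intro ν' _ τ' _ τ hτ
    rw [htInt1 τ hτ]
    exact tInt_le_one τ' u₁
  · intro μ' _ τ' _ τ hτ
    rw [htInt2 τ hτ]
    exact tInt_le_one τ' u₂
  · rintro ⟨h1, -⟩
    rw [hR] at h1
    have hcompl : ({a} : Set Bool)ᶜ = {b} := by
      ext x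
      simp only [mem_compl_iff, mem_singleton_iff]
      rcases hx x with h | h <;> subst h
      · constructor
        · intro h; exact absurd rfl h
        · intro h; exact absurd h hab
      · constructor
        · intro _; rfl
        · intro _ h; exact hab h.symm
    rw [hcompl] at h1
    have hK : ν.toFun ⟨{b}, isClosed_discrete _⟩ = 1 := by
      have h : (⟨{b}, isClosed_discrete _⟩ : Closeds Bool)
          = ⟨closure {b}, isClosed_closure⟩ :=
        Closeds.ext ((IsClosed.closure_eq (isClosed_discrete _)).symm)
      rw [h]; exact hνb
    have h1' : (1:ℝ) ≤ ν.oval {b} := by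
      refine le_csSup ⟨1, ?_⟩ ?_
      · rintro r ⟨K, -, rfl⟩; exact ν.toFun_le_one K
      · exact ⟨⟨{b}, isClosed_discrete _⟩, subset_rfl, hK⟩
    rw [h1] at h1'
    linarith
end

section
/- For every compactum X, the set M_∪X of possibility capacities and the set M_∩X of necessity capacities are closed subsets of the compactum MX of all capacities on X. -/
open Set TopologicalSpace

universe u v

/-!
We show that the complements are open. If `ν` is not a possibility capacity, then
`max (ν A) (ν B) < a < ν (A ∪ B)` for some closed `A`, `B`; upper semicontinuity and normality
of `X` give open `U ⊇ A`, `V ⊇ B` with `ν (cl U), ν (cl V) < a`, and the subbasic neighbourhood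
`c (cl U) < a`, `c (cl V) < a`, `c (U ∪ V) > a` contains no possibility capacity. Dually, if
`ν (A ∩ B) < a < min (ν A) (ν B)`, take an open `O ⊇ A ∩ B` on whose closed subsets `ν < a`, and
open `U ⊇ A`, `V ⊇ B` with `cl U ∩ cl V ⊆ O`; then `c (cl U ∩ cl V) < a`, `c U > a`, `c V > a`
excludes necessity capacities.
-/

theorem exists_isOpen_closure_inter_closure_subset {X : Type*} [TopologicalSpace X]
    [NormalSpace X] {A B O : Set X} (hA : IsClosed A) (hB : IsClosed B) (hO : IsOpen O)
    (hAB : A ∩ B ⊆ O) :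
    ∃ U V : Set X, IsOpen U ∧ IsOpen V ∧ A ⊆ U ∧ B ⊆ V ∧ closure U ∩ closure V ⊆ O := by
  have hdisj : Disjoint (A \ O) (B \ O) :=
    disjoint_left.2 fun x hxA hxB => hxA.2 (hAB ⟨hxA.1, hxB.1⟩)
  obtain ⟨U', V', hU', hV', hAU', hBV', hUV'⟩ :=
    normal_separation (hA.sdiff hO) (hB.sdiff hO) hdisj
  obtain ⟨U, hU, hAU, hUO⟩ :=
    normal_exists_closure_subset hA (hO.union hU') (sdiff_subset_iff.1 hAU')
  obtain ⟨V, hV, hBV, hVO⟩ :=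
    normal_exists_closure_subset hB (hO.union hV') (sdiff_subset_iff.1 hBV')
  refine ⟨U, V, hU, hV, hAU, hBV, fun x ⟨hxU, hxV⟩ => ?_⟩
  rcases hUO hxU with hxO | hxU'
  · exact hxO
  · rcases hVO hxV with hxO | hxV'
    exacts [hxO, (hUV'.ne_of_mem hxU' hxV' rfl).elim]

namespace Capacity

variable {X : Type*} [TopologicalSpace X]

theorem nonneg (ν : Capacity X) (F : Closeds X) : 0 ≤ ν.toFun F :=
  ν.empty' ▸ ν.mono' ⊥ F bot_le

theorem le_one (ν : Capacity X) (F : Closeds X) : ν.toFun F ≤ 1 :=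
  ν.univ' ▸ ν.mono' F ⊤ le_top

theorem mem_Icc_of_toFun_lt_of_lt_toFun (ν μ : Capacity X) {F G : Closeds X} {a : ℝ}
    (h₁ : ν.toFun F < a) (h₂ : a < μ.toFun G) : a ∈ Icc (0 : ℝ) 1 :=
  ⟨(ν.nonneg F).trans h₁.le, h₂.le.trans (μ.le_one G)⟩

theorem max_le_toFun_sup (ν : Capacity X) (A B : Closeds X) :
    max (ν.toFun A) (ν.toFun B) ≤ ν.toFun (A ⊔ B) :=
  max_le (ν.mono' _ _ le_sup_left) (ν.mono' _ _ le_sup_right)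

theorem toFun_inf_le_min (ν : Capacity X) (A B : Closeds X) :
    ν.toFun (A ⊓ B) ≤ min (ν.toFun A) (ν.toFun B) :=
  le_min (ν.mono' _ _ inf_le_left) (ν.mono' _ _ inf_le_right)

theorem bddAbove_oval (ν : Capacity X) (U : Set X) :
    BddAbove {r : ℝ | ∃ K : Closeds X, (K : Set X) ⊆ U ∧ ν.toFun K = r} :=
  ⟨1, fun _ ⟨K, _, hK⟩ => hK ▸ ν.le_one K⟩

theorem toFun_le_oval (ν : Capacity X) {K : Closeds X} {U : Set X} (h : (K : Set X) ⊆ U) :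
    ν.toFun K ≤ ν.oval U :=
  le_csSup (ν.bddAbove_oval U) ⟨K, h, rfl⟩

theorem lt_toFun_of_lt_oval (ν : Capacity X) {U : Set X} {G : Closeds X} {a : ℝ}
    (h : a < ν.oval U) (hUG : U ⊆ G) : a < ν.toFun G := by
  obtain ⟨_, ⟨K, hKU, rfl⟩, hK⟩ :=
    (lt_csSup_iff (ν.bddAbove_oval U) ⟨ν.toFun ⊥, ⊥, empty_subset U, rfl⟩).1 h
  exact hK.trans_le (ν.mono' K G (hKU.trans hUG))

theorem exists_isOpen_toFun_closure_lt [NormalSpace X] (ν : Capacity X) {F : Closeds X}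
    {a : ℝ} (h : ν.toFun F < a) :
    ∃ V : Set X, IsOpen V ∧ (F : Set X) ⊆ V ∧ ν.toFun (Closeds.closure V) < a := by
  obtain ⟨O, hO, hFO, hlt⟩ := ν.usc' F a h
  obtain ⟨V, hV, hFV, hVO⟩ := normal_exists_closure_subset F.isClosed hO hFO
  exact ⟨V, hV, hFV, hlt _ hVO⟩

theorem isOpen_setOf_toFun_lt (F : Closeds X) {a : ℝ} (ha : a ∈ Icc (0 : ℝ) 1) :
    IsOpen {c : Capacity X | c.toFun F < a} :=
  isOpen_generateFrom_of_mem (Or.inl ⟨F, a, ha, rfl⟩)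

theorem isOpen_setOf_lt_oval {U : Set X} (hU : IsOpen U) {a : ℝ} (ha : a ∈ Icc (0 : ℝ) 1) :
    IsOpen {c : Capacity X | a < c.oval U} :=
  isOpen_generateFrom_of_mem (Or.inr ⟨U, hU, a, ha, rfl⟩)

theorem isOpen_setOf_not_isPossibility [NormalSpace X] :
    IsOpen {ν : Capacity X | ¬IsPossibility ν} := by
  refine isOpen_iff_forall_mem_open.2 fun ν hν => ?_
  obtain ⟨A, B, hAB⟩ : ∃ A B : Closeds X, max (ν.toFun A) (ν.toFun B) < ν.toFun (A ⊔ B) := by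
    simp only [mem_ofPred_eq, IsPossibility, not_forall] at hν
    obtain ⟨A, B, hne⟩ := hν
    exact ⟨A, B, (ν.max_le_toFun_sup A B).lt_of_ne' hne⟩
  obtain ⟨a, hmax, hsup⟩ := exists_between hAB
  have hA : ν.toFun A < a := (le_max_left _ _).trans_lt hmax
  have hB : ν.toFun B < a := (le_max_right _ _).trans_lt hmax
  have ha := ν.mem_Icc_of_toFun_lt_of_lt_toFun ν hA hsup
  obtain ⟨U, hU, hAU, hUa⟩ := ν.exists_isOpen_toFun_closure_lt hA
  obtain ⟨V, hV, hBV, hVa⟩ := ν.exists_isOpen_toFun_closure_lt hB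
  refine ⟨{c | c.toFun (Closeds.closure U) < a} ∩ {c | c.toFun (Closeds.closure V) < a} ∩
      {c | a < c.oval (U ∪ V)}, ?_, ?_, ⟨hUa, hVa⟩, ?_⟩
  · rintro c ⟨⟨hcU, hcV⟩, hcUV⟩ hc
    have hlt : a < c.toFun (Closeds.closure U ⊔ Closeds.closure V) :=
      c.lt_toFun_of_lt_oval hcUV (union_subset_union subset_closure subset_closure)
    rw [hc] at hlt
    exact (max_lt hcU hcV).not_gt hlt
  · exact ((isOpen_setOf_toFun_lt _ ha).inter (isOpen_setOf_toFun_lt _ ha)).inter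
      (isOpen_setOf_lt_oval (hU.union hV) ha)
  · exact hsup.trans_le (ν.toFun_le_oval (union_subset_union hAU hBV))

theorem isOpen_setOf_not_isNecessity [NormalSpace X] :
    IsOpen {ν : Capacity X | ¬IsNecessity ν} := by
  refine isOpen_iff_forall_mem_open.2 fun ν hν => ?_
  obtain ⟨A, B, hAB⟩ : ∃ A B : Closeds X, ν.toFun (A ⊓ B) < min (ν.toFun A) (ν.toFun B) := by
    simp only [mem_ofPred_eq, IsNecessity, not_forall] at hν
    obtain ⟨A, B, hne⟩ := hν
    exact ⟨A, B, (ν.toFun_inf_le_min A B).lt_of_ne hne⟩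
  obtain ⟨a, hinf, hmin⟩ := exists_between hAB
  have hA : a < ν.toFun A := hmin.trans_le (min_le_left _ _)
  have hB : a < ν.toFun B := hmin.trans_le (min_le_right _ _)
  have ha := ν.mem_Icc_of_toFun_lt_of_lt_toFun ν hinf hA
  obtain ⟨O, hO, hABO, hOa⟩ := ν.usc' (A ⊓ B) a hinf
  obtain ⟨U, V, hU, hV, hAU, hBV, hUVO⟩ :=
    exists_isOpen_closure_inter_closure_subset A.isClosed B.isClosed hO hABO
  refine ⟨{c | c.toFun (Closeds.closure U ⊓ Closeds.closure V) < a} ∩ {c | a < c.oval U} ∩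
      {c | a < c.oval V}, ?_, ?_, ⟨hOa _ hUVO, ?_⟩, ?_⟩
  · rintro c ⟨⟨hcUV, hcU⟩, hcV⟩ hc
    rw [mem_ofPred_eq, hc] at hcUV
    exact hcUV.not_ge (le_min (c.lt_toFun_of_lt_oval hcU subset_closure).le
      (c.lt_toFun_of_lt_oval hcV subset_closure).le)
  · exact ((isOpen_setOf_toFun_lt _ ha).inter (isOpen_setOf_lt_oval hU ha)).inter
      (isOpen_setOf_lt_oval hV ha)
  · exact hA.trans_le (ν.toFun_le_oval hAU)
  · exact hB.trans_le (ν.toFun_le_oval hBV)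

end Capacity

/-- for every compactum `X`, the set `M_∪X` of possibility capacities and
the set `M_∩X` of necessity capacities are closed subsets of the space `MX` of all
capacities. -/
theorem possibility_and_necessity_closed (X : Type u) [TopologicalSpace X]
    [CompactSpace X] [T2Space X] :
    IsClosed {ν : Capacity X | IsPossibility ν} ∧
    IsClosed {ν : Capacity X | IsNecessity ν} :=
  ⟨isOpen_compl_iff.1 Capacity.isOpen_setOf_not_isPossibility,
    isOpen_compl_iff.1 Capacity.isOpen_setOf_not_isNecessity⟩
end

section
/- Let u: Z = ∏ᵢ₌₁ⁿ Zᵢ → [0,1]ⁿ be an n-player game with compacta Zᵢ and continuous payoff functions uᵢ, let ⋆ and ∗ be continuous t-norms, and consider the game in possibility-capacity strategies with expected payoffs euᵢ(ν₁,…,νₙ) = ∫_Z^{∨⋆} uᵢ d(ν₁ ⊛ … ⊛ νₙ), the tensor product generated by ∗. Let μᵢ ∈ M_∪Zᵢ be the greatest element, i.e. μᵢ(A) = 1 for every nonempty closed A ⊆ Zᵢ. Then (μ₁,…,μₙ) is a Nash equilibrium: for every player i and every νᵢ ∈ M_∪Zᵢ, euᵢ(μ₁,…,νᵢ,…,μₙ)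 ≤ euᵢ(μ₁,…,μᵢ,…,μₙ). -/
open Set TopologicalSpace

universe u v

/-- The iterated product of a list of reals under a t-norm (empty product is `1`,
the neutral element). -/
def Tnorm.listProd (ast : Tnorm) : List ℝ → ℝ
  | [] => 1
  | a :: l => ast.toFun a (ast.listProd l)
/-- `IsPossTensorAll ast μ τ` says that `τ ∈ M_∪(∏ Zⱼ)` is the tensor product
`ν₁ ⊛ … ⊛ νₙ` generated by the t-norm `ast` of the possibility capacities `μ j`:
the possibility capacity with density `[⊛ μ](z) = ∗ⱼ [μⱼ](zⱼ)`. -/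
def IsPossTensorAll {n : ℕ} {Z : Fin n → Type u} [∀ j, TopologicalSpace (Z j)]
    (ast : Tnorm) (μ : ∀ j, Capacity (Z j)) (τ : Capacity (∀ j, Z j)) : Prop :=
  ∀ B : Set (∀ j, Z j), IsClosed B →
    τ.cval B = sSup ((fun z : ∀ j, Z j =>
      ast.listProd ((List.finRange n).map fun j => (μ j).cval {z j})) '' B)

/-!
Every density of the greatest elements `μⱼ` is identically `1`, hence so is the density of
their tensor product; the latter therefore takes the value `1` on every nonempty set and
dominates every capacity, in particular the tensor product obtained after player `i` deviates.
The t-normed integral is monotone in the capacity, so no deviation raises the payoff.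
-/

namespace Capacity

variable {X : Type u} [TopologicalSpace X]

lemma cval_mem (ν : Capacity X) (A : Set X) : ν.cval A ∈ Icc (0:ℝ) 1 :=
  ⟨ν.empty' ▸ ν.mono' _ _ bot_le, ν.univ' ▸ ν.mono' _ _ le_top⟩

lemma cval_closure (ν : Capacity X) (A : Set X) : ν.cval (closure A) = ν.cval A := by
  simp only [cval, closure_closure]

lemma cval_empty (ν : Capacity X) : ν.cval ∅ = 0 := by
  simp only [cval, closure_empty]
  exact ν.empty'

lemma cval_le_of_forall_nonempty {ν ν' : Capacity X}
    (h : ∀ A : Set X, A.Nonempty → ν'.cval A = 1) (A : Set X) : ν.cval A ≤ ν'.cval A := by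
  rcases A.eq_empty_or_nonempty with rfl | hA
  · rw [cval_empty, cval_empty]
  · exact h A hA ▸ (ν.cval_mem A).2

end Capacity

namespace Tnorm

lemma listProd_eq_one (ast : Tnorm) {l : List ℝ} (h : ∀ a ∈ l, a = 1) : ast.listProd l = 1 := by
  induction l with
  | nil => rfl
  | cons a l ih =>
    rw [listProd, h a List.mem_cons_self, ih fun b hb => h b (List.mem_cons_of_mem a hb)]
    exact ast.one' 1 ⟨zero_le_one, le_rfl⟩

end Tnorm

lemma tInt_mono {X : Type u} [TopologicalSpace X] (star : Tnorm) {ν ν' : Capacity X}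
    (h : ∀ A : Set X, ν.cval A ≤ ν'.cval A) (f : X → ℝ) : tInt star ν f ≤ tInt star ν' f := by
  have hbdd : BddAbove {r : ℝ | ∃ t ∈ Icc (0:ℝ) 1, r = star.toFun (ν'.cval (f ⁻¹' Icc t 1)) t} :=
    ⟨1, by rintro r ⟨t, ht, rfl⟩; exact (star.mem' _ (ν'.cval_mem _) t ht).2⟩
  refine csSup_le ⟨_, 0, ⟨le_rfl, zero_le_one⟩, rfl⟩ ?_
  rintro r ⟨t, ht, rfl⟩
  calc star.toFun (ν.cval (f ⁻¹' Icc t 1)) t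
      ≤ star.toFun (ν'.cval (f ⁻¹' Icc t 1)) t :=
        star.mono' _ (ν.cval_mem _) _ (ν'.cval_mem _) _ ht _ ht (h _) le_rfl
    _ ≤ tInt star ν' f := le_csSup hbdd ⟨t, ht, rfl⟩

lemma IsPossTensorAll.cval_eq_one {n : ℕ} {Z : Fin n → Type u} [∀ j, TopologicalSpace (Z j)]
    {ast : Tnorm} {μ : ∀ j, Capacity (Z j)} {τ : Capacity (∀ j, Z j)}
    (hτ : IsPossTensorAll ast μ τ) (hμ : ∀ j (z : Z j), (μ j).cval {z} = 1)
    {A : Set (∀ j, Z j)} (hA : A.Nonempty) : τ.cval A = 1 := by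
  have hdensity : (fun z : ∀ j, Z j =>
      ast.listProd ((List.finRange n).map fun j => (μ j).cval {z j})) = fun _ => 1 := by
    funext z
    refine ast.listProd_eq_one fun a ha => ?_
    obtain ⟨j, -, rfl⟩ := List.mem_map.1 ha
    exact hμ j (z j)
  rw [← τ.cval_closure, hτ _ isClosed_closure, hdensity, hA.closure.image_const, csSup_singleton]

theorem greatest_elements_nash_general {n : ℕ} (Z : Fin n → Type u)
    [∀ j, TopologicalSpace (Z j)]
    (u : (∀ j, Z j) → Fin n → ℝ)
    (star ast : Tnorm)
    (μ : ∀ j, Capacity (Z j))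
    (hμ : ∀ j, ∀ A : Set (Z j), IsClosed A → A.Nonempty → (μ j).cval A = 1) :
    ∀ i : Fin n, ∀ ν : Capacity (Z i), IsPossibility ν →
      ∀ τ' : Capacity (∀ j, Z j), IsPossTensorAll ast (Function.update μ i ν) τ' →
      ∀ τ : Capacity (∀ j, Z j), IsPossTensorAll ast μ τ →
        tInt star τ' (fun z => u z i) ≤ tInt star τ (fun z => u z i) := by
  intro i _ _ τ' _ τ hτ
  have hμ_point : ∀ j (z : Z j), (μ j).cval {z} = 1 := fun j z => by
    rw [← Capacity.cval_closure]
    exact hμ j _ isClosed_closure (singleton_nonempty z).closure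
  exact tInt_mono star
    (Capacity.cval_le_of_forall_nonempty fun _ hA => hτ.cval_eq_one hμ_point hA) _

/-- in the game in possibility-capacity strategies with expected payoffs
`euᵢ(ν₁,…,νₙ) = ∫^{∨⋆} uᵢ d(ν₁ ⊛ … ⊛ νₙ)` (tensor product generated by `∗`), the
profile of greatest elements `μᵢ` of `M_∪Zᵢ` (i.e. `μᵢ(A) = 1` for every nonempty
closed `A`) is a Nash equilibrium. -/
theorem greatest_elements_nash {n : ℕ} (Z : Fin n → Type u)
    [∀ j, TopologicalSpace (Z j)] [∀ j, CompactSpace (Z j)] [∀ j, T2Space (Z j)]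
    (u : (∀ j, Z j) → Fin n → ℝ) (hu : Continuous u)
    (hu01 : ∀ z j, u z j ∈ Icc (0:ℝ) 1)
    (star ast : Tnorm) (hstar : star.Cont) (hast : ast.Cont)
    (μ : ∀ j, Capacity (Z j))
    (hμ : ∀ j, ∀ A : Set (Z j), IsClosed A → A.Nonempty → (μ j).cval A = 1) :
    ∀ i : Fin n, ∀ ν : Capacity (Z i), IsPossibility ν →
      ∀ τ' : Capacity (∀ j, Z j), IsPossTensorAll ast (Function.update μ i ν) τ' →
      ∀ τ : Capacity (∀ j, Z j), IsPossTensorAll ast μ τ →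
        tInt star τ' (fun z => u z i) ≤ tInt star τ (fun z => u z i) :=
  greatest_elements_nash_general Z u star ast μ hμ
end

section
/- Let X₁, X₂ be compacta, ∗ a continuous t-norm, and μ₁ ∈ M_∪X₁, μ₂ ∈ M_∪X₂ possibility capacities. Then the marginals of the tensor product generated by ∗ recover the factors: M(p₁)(μ₁ ⊛ μ₂) = μ₁ and M(p₂)(μ₁ ⊛ μ₂) = μ₂, where p₁, p₂ are the coordinate projections of X₁ × X₂ and for a continuous map f: X → Y and capacity ν ∈ MX, Mf(ν)(A) = ν(f⁻¹(A)) for closed A ⊆ Y. -/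
open Set TopologicalSpace

universe u v

/-!
A possibility capacity on a compactum attains its value on a closed set `F` at a point:
`ν(F) = [ν](x)` for some `x ∈ F`. Otherwise every point of `F` has a closed neighbourhood all of
whose closed subsets have capacity `< ν(F)` (upper semicontinuity), finitely many of them cover
`F`, and maxitivity gives `ν(F) < ν(F)`. Hence the supremum defining `[μ₁ ⊛ μ₂](A × B)` is the
maximum `μ₁(A) ∗ μ₂(B)`, and the marginals follow from `μ₂(Y) = 1 = μ₁(X)`, `1` being the unit of
the t-norm.
-/

namespace Tnorm

variable (ast : Tnorm) {s : ℝ}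

lemma toFun_zero_left (hs : s ∈ Icc (0 : ℝ) 1) : ast.toFun 0 s = 0 := by
  have h01 : (0 : ℝ) ∈ Icc (0 : ℝ) 1 := ⟨le_rfl, zero_le_one⟩
  have h11 : (1 : ℝ) ∈ Icc (0 : ℝ) 1 := ⟨zero_le_one, le_rfl⟩
  refine le_antisymm ?_ (ast.mem' 0 h01 s hs).1
  calc ast.toFun 0 s ≤ ast.toFun 0 1 := ast.mono' 0 h01 0 h01 s hs 1 h11 le_rfl hs.2
    _ = 0 := ast.one' 0 h01

lemma toFun_zero_right (hs : s ∈ Icc (0 : ℝ) 1) : ast.toFun s 0 = 0 := by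
  rw [ast.comm' s hs 0 ⟨le_rfl, zero_le_one⟩, ast.toFun_zero_left hs]

lemma toFun_one_left (hs : s ∈ Icc (0 : ℝ) 1) : ast.toFun 1 s = s := by
  rw [ast.comm' 1 ⟨zero_le_one, le_rfl⟩ s hs, ast.one' s hs]

end Tnorm

namespace Capacity

variable {Z : Type*} [TopologicalSpace Z] (ν : Capacity Z)

lemma cval_of_isClosed {A : Set Z} (hA : IsClosed A) : ν.cval A = ν.toFun ⟨A, hA⟩ := by
  unfold cval
  congr 1
  exact SetLike.ext' hA.closure_eq

lemma cval_empty_s17 : ν.cval ∅ = 0 := by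
  rw [cval_of_isClosed ν isClosed_empty, ← ν.empty']
  rfl

lemma cval_univ : ν.cval univ = 1 := by
  rw [cval_of_isClosed ν isClosed_univ, ← ν.univ']
  rfl

lemma cval_mono {A B : Set Z} (h : A ⊆ B) : ν.cval A ≤ ν.cval B :=
  ν.mono' _ _ (closure_mono h)

lemma cval_mem_Icc (A : Set Z) : ν.cval A ∈ Icc (0 : ℝ) 1 := by
  constructor
  · simpa only [cval_empty_s17] using ν.cval_mono (empty_subset A)
  · simpa only [cval_univ] using ν.cval_mono (subset_univ A)

lemma exists_mem_nhds_forall_cval_lt [RegularSpace Z] {x : Z} {a : ℝ}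
    (hx : ν.cval {x} < a) : ∃ N ∈ nhds x, ∀ B ⊆ N, ν.cval B < a := by
  obtain ⟨O, hO, hxO, hOa⟩ := ν.usc' _ a hx
  have hO_nhds : O ∈ nhds x := hO.mem_nhds (hxO (subset_closure rfl))
  obtain ⟨N, hN, hNc, hNO⟩ := exists_mem_nhds_isClosed_subset hO_nhds
  exact ⟨N, hN, fun B hB => hOa _ ((closure_minimal hB hNc).trans hNO)⟩

end Capacity

namespace IsPossibility

open Capacity

variable {Z : Type*} [TopologicalSpace Z] {ν : Capacity Z}

lemma cval_union (hν : IsPossibility ν) (A B : Set Z) :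
    ν.cval (A ∪ B) = max (ν.cval A) (ν.cval B) := by
  unfold cval
  rw [← hν]
  congr 1
  exact SetLike.ext' closure_union

lemma cval_biUnion_lt (hν : IsPossibility ν) {ι : Type*} {C : ι → Set Z} {a : ℝ} (ha : 0 < a)
    (t : Finset ι) (h : ∀ i ∈ t, ν.cval (C i) < a) : ν.cval (⋃ i ∈ t, C i) < a := by
  classical
  induction t using Finset.induction_on with
  | empty => simpa only [Finset.notMem_empty, iUnion_of_empty, iUnion_empty, cval_empty_s17] using ha
  | insert j t _ ih =>
    rw [Finset.set_biUnion_insert, hν.cval_union]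
    exact max_lt (h j (Finset.mem_insert_self j t))
      (ih fun i hi => h i (Finset.mem_insert_of_mem hi))

lemma exists_cval_singleton_eq [RegularSpace Z] (hν : IsPossibility ν) {F : Set Z}
    (hF : IsCompact F) (hne : F.Nonempty) : ∃ x ∈ F, ν.cval {x} = ν.cval F := by
  suffices ∃ x ∈ F, ν.cval F ≤ ν.cval {x} by
    obtain ⟨x, hxF, hx⟩ := this
    exact ⟨x, hxF, le_antisymm (ν.cval_mono (singleton_subset_iff.mpr hxF)) hx⟩
  by_contra! hlt
  have ha : 0 < ν.cval F := by
    obtain ⟨x, hx⟩ := hne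
    exact (ν.cval_mem_Icc {x}).1.trans_lt (hlt x hx)
  choose! N hN hNlt using fun x (hx : x ∈ F) => ν.exists_mem_nhds_forall_cval_lt (hlt x hx)
  obtain ⟨t, htF, hcover⟩ := hF.elim_nhds_subcover N hN
  have hF_eq : F = ⋃ x ∈ t, F ∩ N x := by
    rw [← inter_iUnion₂]
    exact (inter_eq_left.mpr hcover).symm
  have hlt_self : ν.cval F < ν.cval F := by
    conv_lhs => rw [hF_eq]
    exact hν.cval_biUnion_lt ha t fun x hx => hNlt x (htF x hx) _ inter_subset_right
  exact lt_irrefl _ hlt_self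

end IsPossibility

namespace IsPossTensor₂

open Capacity

variable {X Y : Type*} [TopologicalSpace X] [RegularSpace X] [TopologicalSpace Y] [RegularSpace Y]
  {ast : Tnorm} {μ : Capacity X} {ν : Capacity Y} {τ : Capacity (X × Y)}

lemma cval_prod (hμ : IsPossibility μ) (hν : IsPossibility ν) (hτ : IsPossTensor₂ ast μ ν τ)
    {A : Set X} {B : Set Y} (hA : IsClosed A) (hA' : IsCompact A) (hB : IsClosed B)
    (hB' : IsCompact B) : τ.cval (A ×ˢ B) = ast.toFun (μ.cval A) (ν.cval B) := by
  rw [hτ _ (hA.prod hB)]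
  rcases A.eq_empty_or_nonempty with rfl | hAne
  · rw [empty_prod, image_empty, Real.sSup_empty, cval_empty_s17,
      ast.toFun_zero_left (ν.cval_mem_Icc B)]
  rcases B.eq_empty_or_nonempty with rfl | hBne
  · rw [prod_empty, image_empty, Real.sSup_empty, cval_empty_s17,
      ast.toFun_zero_right (μ.cval_mem_Icc A)]
  obtain ⟨x₀, hx₀, hμx₀⟩ := hμ.exists_cval_singleton_eq hA' hAne
  obtain ⟨y₀, hy₀, hνy₀⟩ := hν.exists_cval_singleton_eq hB' hBne
  refine IsGreatest.csSup_eq ⟨⟨(x₀, y₀), ⟨hx₀, hy₀⟩, by simp only [hμx₀, hνy₀]⟩, ?_⟩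
  rintro _ ⟨⟨x, y⟩, ⟨hx, hy⟩, rfl⟩
  exact ast.mono' _ (μ.cval_mem_Icc _) _ (μ.cval_mem_Icc _) _ (ν.cval_mem_Icc _) _
    (ν.cval_mem_Icc _) (μ.cval_mono (singleton_subset_iff.mpr hx))
    (ν.cval_mono (singleton_subset_iff.mpr hy))

end IsPossTensor₂

theorem tensor_product_marginals_general {X : Type u} {Y : Type u}
    [TopologicalSpace X] [CompactSpace X] [T2Space X]
    [TopologicalSpace Y] [CompactSpace Y] [T2Space Y]
    (ast : Tnorm)
    (μ₁ : Capacity X) (μ₂ : Capacity Y) (hμ₁ : IsPossibility μ₁) (hμ₂ : IsPossibility μ₂)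
    (τ : Capacity (X × Y)) (hτ : IsPossTensor₂ ast μ₁ μ₂ τ) :
    (∀ A : Set X, IsClosed A → τ.cval (Prod.fst ⁻¹' A) = μ₁.cval A) ∧
    (∀ A : Set Y, IsClosed A → τ.cval (Prod.snd ⁻¹' A) = μ₂.cval A) := by
  constructor
  · intro A hA
    rw [← prod_univ, hτ.cval_prod hμ₁ hμ₂ hA hA.isCompact isClosed_univ isCompact_univ,
      Capacity.cval_univ, ast.one' _ (μ₁.cval_mem_Icc A)]
  · intro A hA
    rw [← univ_prod, hτ.cval_prod hμ₁ hμ₂ isClosed_univ isCompact_univ hA hA.isCompact,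
      Capacity.cval_univ, ast.toFun_one_left (μ₂.cval_mem_Icc A)]

/-- the marginals of the tensor product (generated by a continuous t-norm)
of two possibility capacities recover the factors:
`M(p₁)(μ₁ ⊛ μ₂) = μ₁` and `M(p₂)(μ₁ ⊛ μ₂) = μ₂`, where `Mf(ν)(A) = ν(f⁻¹(A))`. -/
theorem tensor_product_marginals {X : Type u} {Y : Type u}
    [TopologicalSpace X] [CompactSpace X] [T2Space X]
    [TopologicalSpace Y] [CompactSpace Y] [T2Space Y]
    (ast : Tnorm) (hast : ast.Cont)
    (μ₁ : Capacity X) (μ₂ : Capacity Y) (hμ₁ : IsPossibility μ₁) (hμ₂ : IsPossibility μ₂)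
    (τ : Capacity (X × Y)) (hτ : IsPossTensor₂ ast μ₁ μ₂ τ) :
    (∀ A : Set X, IsClosed A → τ.cval (Prod.fst ⁻¹' A) = μ₁.cval A) ∧
    (∀ A : Set Y, IsClosed A → τ.cval (Prod.snd ⁻¹' A) = μ₂.cval A) :=
  tensor_product_marginals_general ast μ₁ μ₂ hμ₁ hμ₂ τ hτ
end

section
/- Let X be a compactum. For every capacity ν on X the density [ν]: X → [0,1], [ν](x) = ν({x}), is an upper semicontinuous function. Moreover, the assignment ν ↦ [ν] is a bijection between the possibility capacities on X and the upper semicontinuous functions f: X → [0,1] with max f = 1: every such f determines a possibility capacity (f) by (f)(F) = max{f(x) : x ∈ F} for closed F, and every possibility capacity ν satisfies ν = ([ν]). -/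
open Set TopologicalSpace

universe u v

/-!
The upper semicontinuity of a capacity `ν` at a closed set `F` says that `ν` stays below `a`
on all closed sets near `F`; applied to `F = {x}` it is exactly the upper semicontinuity of the
density `x ↦ ν {x}`. For a possibility capacity `ν` and a closed `F` whose points all have
density `< a`, every `x ∈ F` has a closed neighbourhood of capacity `< a` (regularity), finitely
many of them cover the compact set `F`, and maxitivity bounds the capacity of their union, hence
`ν F`, by `a`. So `ν F ≤ sup_{x ∈ F} ν {x}`, and the reverse inequality is monotonicity.
Conversely `F ↦ sup f(F)` is a capacity because the sets `{f < a}` are open.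
-/

open Topology

section SupImage

variable {X : Type u} {f : X → ℝ}

theorem sSup_image_nonneg (hf₀ : ∀ x, 0 ≤ f x) (A : Set X) : 0 ≤ sSup (f '' A) :=
  Real.sSup_nonneg <| forall_mem_image.2 fun x _ => hf₀ x

theorem le_sSup_image (hf : BddAbove (range f)) {A : Set X} {x : X} (hx : x ∈ A) :
    f x ≤ sSup (f '' A) :=
  le_csSup (hf.mono (image_subset_range f A)) (mem_image_of_mem f hx)

theorem sSup_image_mono (hf₀ : ∀ x, 0 ≤ f x) (hf : BddAbove (range f)) {A B : Set X}
    (hAB : A ⊆ B) : sSup (f '' A) ≤ sSup (f '' B) :=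
  Real.sSup_le (forall_mem_image.2 fun _ hx => le_sSup_image hf (hAB hx))
    (sSup_image_nonneg hf₀ B)

end SupImage

namespace Capacity

variable {X : Type u} [TopologicalSpace X]

theorem toFun_injective : Function.Injective (toFun : Capacity X → Closeds X → ℝ) := by
  rintro ⟨⟩ ⟨⟩ h
  cases h
  rfl

theorem cval_eq (ν : Capacity X) {A : Set X} (hA : IsClosed A) : ν.cval A = ν.toFun ⟨A, hA⟩ :=
  congrArg ν.toFun (Closeds.ext hA.closure_eq)

theorem cval_coe (ν : Capacity X) (K : Closeds X) : ν.cval K = ν.toFun K :=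
  ν.cval_eq K.isClosed

theorem cval_singleton [T1Space X] (ν : Capacity X) (x : X) : ν.cval {x} = ν.toFun {x} :=
  ν.cval_eq isClosed_singleton

theorem cval_mono_s19 (ν : Capacity X) {A B : Set X} (hAB : A ⊆ B) : ν.cval A ≤ ν.cval B :=
  ν.mono' _ _ (closure_mono hAB)

theorem cval_nonneg (ν : Capacity X) (A : Set X) : 0 ≤ ν.cval A :=
  ν.empty' ▸ ν.mono' ⊥ _ bot_le

theorem cval_le_one (ν : Capacity X) (A : Set X) : ν.cval A ≤ 1 :=
  ν.univ' ▸ ν.mono' _ ⊤ le_top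

theorem eq_of_cval_eq {ν μ : Capacity X} (h : ∀ F : Set X, IsClosed F → ν.cval F = μ.cval F) :
    ν = μ :=
  toFun_injective <| funext fun K => by
    simpa only [cval_coe] using h K K.isClosed

theorem upperSemicontinuous_cval_singleton [T1Space X] (ν : Capacity X) :
    UpperSemicontinuous fun x => ν.cval {x} := by
  intro x a ha
  simp only [cval_singleton] at ha ⊢
  obtain ⟨O, hO, hxO, hlt⟩ := ν.usc' {x} a ha
  filter_upwards [hO.mem_nhds (singleton_subset_iff.1 hxO)] with y hy
  exact hlt {y} (singleton_subset_iff.2 hy)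

theorem exists_mem_nhds_toFun_lt [T1Space X] [RegularSpace X] (ν : Capacity X) {x : X} {a : ℝ}
    (hx : ν.cval {x} < a) : ∃ V : Closeds X, (V : Set X) ∈ 𝓝 x ∧ ν.toFun V < a := by
  rw [cval_singleton] at hx
  obtain ⟨O, hO, hxO, hlt⟩ := ν.usc' {x} a hx
  obtain ⟨V, hVx, hV, hVO⟩ := exists_mem_nhds_isClosed_subset
    (hO.mem_nhds (singleton_subset_iff.1 hxO))
  exact ⟨⟨V, hV⟩, hVx, hlt ⟨V, hV⟩ hVO⟩

end Capacity

namespace IsPossibility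

variable {X : Type u} [TopologicalSpace X] {ν : Capacity X}

theorem toFun_finset_sup_lt (hν : IsPossibility ν) {ι : Type v} (t : Finset ι)
    (g : ι → Closeds X) {a : ℝ} (ha : 0 < a) (h : ∀ i ∈ t, ν.toFun (g i) < a) :
    ν.toFun (t.sup g) < a := by
  induction t using Finset.cons_induction with
  | empty => simpa only [Finset.sup_empty, ν.empty'] using ha
  | cons i t hit ih =>
    rw [Finset.sup_cons, hν]
    exact max_lt (h i (Finset.mem_cons_self i t)) (ih fun j hj => h j (Finset.mem_cons_of_mem hj))

theorem cval_lt_of_isCompact [T1Space X] [RegularSpace X] (hν : IsPossibility ν) {K : Set X}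
    (hK : IsCompact K) {a : ℝ} (ha : 0 < a) (h : ∀ x ∈ K, ν.cval {x} < a) : ν.cval K < a := by
  choose! V hVx hVa using fun x (hx : x ∈ K) => ν.exists_mem_nhds_toFun_lt (h x hx)
  obtain ⟨t, htK, hKV⟩ := hK.elim_nhds_subcover (fun x => (V x : Set X)) hVx
  have hKt : K ⊆ (t.sup V : Closeds X) := by
    rwa [Closeds.coe_finset_sup, Finset.sup_set_eq_biUnion]
  calc ν.cval K ≤ ν.cval (t.sup V : Closeds X) := ν.cval_mono_s19 hKt
    _ = ν.toFun (t.sup V) := ν.cval_coe _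
    _ < a := hν.toFun_finset_sup_lt t V ha fun x hx => hVa x (htK x hx)

theorem cval_eq_sSup_image [T1Space X] [RegularSpace X] (hν : IsPossibility ν) {F : Set X}
    (hF : IsCompact F) : ν.cval F = sSup ((fun x => ν.cval {x}) '' F) := by
  have hbdd : BddAbove (range fun x => ν.cval {x}) :=
    ⟨1, forall_mem_range.2 fun x => ν.cval_le_one {x}⟩
  refine le_antisymm (le_of_forall_gt fun a ha => ?_) ?_
  · refine hν.cval_lt_of_isCompact hF ?_ fun x hx => (le_sSup_image hbdd hx).trans_lt ha
    exact (sSup_image_nonneg (fun x => ν.cval_nonneg {x}) F).trans_lt ha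
  · exact Real.sSup_le (forall_mem_image.2 fun x hx => ν.cval_mono_s19 (singleton_subset_iff.2 hx))
      (ν.cval_nonneg F)

end IsPossibility

namespace Capacity

variable {X : Type u} [TopologicalSpace X]

noncomputable def ofDensity (f : X → ℝ) (hf : UpperSemicontinuous f)
    (h01 : ∀ x, f x ∈ Icc (0 : ℝ) 1) (h1 : ∃ x, f x = 1) : Capacity X where
  toFun K := sSup (f '' K)
  empty' := by simp only [Closeds.coe_bot, image_empty, Real.sSup_empty]
  univ' := by
    obtain ⟨x, hx⟩ := h1
    exact le_antisymm (Real.sSup_le (forall_mem_image.2 fun y _ => (h01 y).2) zero_le_one)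
      (hx ▸ le_sSup_image ⟨1, forall_mem_range.2 fun y => (h01 y).2⟩ (mem_univ x))
  mono' _ _ hFG :=
    sSup_image_mono (fun x => (h01 x).1) ⟨1, forall_mem_range.2 fun y => (h01 y).2⟩ hFG
  usc' K a ha := by
    obtain ⟨b, hKb, hba⟩ := exists_between ha
    have hb : 0 ≤ b := (sSup_image_nonneg (fun x => (h01 x).1) _).trans hKb.le
    refine ⟨f ⁻¹' Iio b, upperSemicontinuous_iff_isOpen_preimage.1 hf b, fun x hx => ?_,
      fun B hB => (Real.sSup_le (forall_mem_image.2 fun x hx => (hB hx).le) hb).trans_lt hba⟩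
    exact (le_sSup_image ⟨1, forall_mem_range.2 fun y => (h01 y).2⟩ hx).trans_lt hKb

variable {f : X → ℝ} {hf : UpperSemicontinuous f} {h01 : ∀ x, f x ∈ Icc (0 : ℝ) 1}
  {h1 : ∃ x, f x = 1}

theorem ofDensity_cval {F : Set X} (hF : IsClosed F) :
    (ofDensity f hf h01 h1).cval F = sSup (f '' F) :=
  (ofDensity f hf h01 h1).cval_eq hF

theorem ofDensity_isPossibility : IsPossibility (ofDensity f hf h01 h1) := by
  have hf₀ : ∀ x, 0 ≤ f x := fun x => (h01 x).1
  have hbdd : BddAbove (range f) := ⟨1, forall_mem_range.2 fun y => (h01 y).2⟩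
  intro A B
  show sSup (f '' (A ∪ B : Set X)) = max (sSup (f '' A)) (sSup (f '' B))
  refine le_antisymm (Real.sSup_le (forall_mem_image.2 fun x hx => ?_)
    ((sSup_image_nonneg hf₀ _).trans (le_max_left _ _)))
    (max_le (sSup_image_mono hf₀ hbdd subset_union_left)
      (sSup_image_mono hf₀ hbdd subset_union_right))
  rcases hx with hx | hx
  · exact (le_sSup_image hbdd hx).trans (le_max_left _ _)
  · exact (le_sSup_image hbdd hx).trans (le_max_right _ _)

end Capacity

/-- the density `[ν](x) = ν({x})` of any capacity is upper semicontinuous,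
and `ν ↦ [ν]` is a bijection between possibility capacities and upper semicontinuous
`f : X → [0,1]` with `max f = 1`: each such `f` determines a unique possibility capacity
`(f)` with `(f)(F) = max {f x : x ∈ F}`, and every possibility capacity `ν` is recovered
from its density via `ν(F) = max {[ν](x) : x ∈ F}`. -/
theorem density_usc_and_bijection (X : Type u) [TopologicalSpace X]
    [CompactSpace X] [T2Space X] :
    (∀ ν : Capacity X, UpperSemicontinuous (fun x : X => ν.cval {x})) ∧
    (∀ f : X → ℝ, UpperSemicontinuous f → (∀ x, f x ∈ Icc (0:ℝ) 1) → (∃ x, f x = 1) →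
      ∃! ν : Capacity X, IsPossibility ν ∧
        ∀ F : Set X, IsClosed F → ν.cval F = sSup (f '' F)) ∧
    (∀ ν : Capacity X, IsPossibility ν →
      ∀ F : Set X, IsClosed F → ν.cval F = sSup ((fun x : X => ν.cval {x}) '' F)) := by
  refine ⟨Capacity.upperSemicontinuous_cval_singleton, fun f hf h01 h1 => ?_,
    fun ν hν F hF => hν.cval_eq_sSup_image hF.isCompact⟩
  refine ⟨Capacity.ofDensity f hf h01 h1,
    ⟨Capacity.ofDensity_isPossibility, fun F hF => Capacity.ofDensity_cval hF⟩, ?_⟩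
  rintro ν ⟨-, hν⟩
  exact Capacity.eq_of_cval_eq fun F hF => (hν F hF).trans (Capacity.ofDensity_cval hF).symm
end
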